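/- arXiv:math/0703190 — 2 statements merged into one kernel-verified Lean document; each statement's English description precedes it below -/
import Mathlib

section
/- If a semigroup S has an automatic structure, then it has an automatic structure (A, L) with uniqueness, i.e., such that the restriction of the representation map ψ to L is a bijection onto S. -/
namespace AutoSg

/-- Evaluation of a nonempty word over alphabet `A` in a semigroup `S`
via the letter-interpretation map `ψ`; the empty word evaluates to `none`. -/
def evalWord {S : Type*} [Semigroup S] {A : Type*} (ψ : A → S) : List A → Option S
  | [] => none
  | a :: w => some ((w.map ψ).foldl (· * ·) (ψ a))

/-- The standard padding map `δ_A` on pairs of words, with `none` playing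
the role of the padding symbol `$`. -/
def padMap {A : Type*} (u v : List A) : List (Option A × Option A) :=
  List.zipWith Prod.mk (u.map some ++ List.replicate (v.length - u.length) none)
    (v.map some ++ List.replicate (u.length - v.length) none)

/-- `(A, L)` is an automatic structure for the semigroup `S` with respect to `ψ`. -/
structure IsAutomaticStructure (S : Type*) [Semigroup S] {A : Type*} [Finite A]
    (ψ : A → S) (L : Language A) : Prop where
  nonempty_words : ∀ w ∈ L, w ≠ []
  regular : L.IsRegular
  onto : ∀ s : S, ∃ w ∈ L, evalWord ψ w = some s
  eq_regular : Language.IsRegular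
    {p : List (Option A × Option A) |
      ∃ u ∈ L, ∃ v ∈ L, p = padMap u v ∧ evalWord ψ u = evalWord ψ v}
  mul_regular : ∀ a : A, Language.IsRegular
    {p : List (Option A × Option A) |
      ∃ u ∈ L, ∃ v ∈ L, p = padMap u v ∧ evalWord ψ (u ++ [a]) = evalWord ψ v}

/-- An automatic structure with uniqueness: each element of `S` is represented
by exactly one word of `L`. -/
structure IsAutomaticStructureWithUniqueness (S : Type*) [Semigroup S] {A : Type*} [Finite A]
    (ψ : A → S) (L : Language A) extends IsAutomaticStructure S ψ L : Prop where
  unique : ∀ u ∈ L, ∀ v ∈ L, evalWord ψ u = evalWord ψ v → u = v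

/-- A semigroup is automatic if it admits an automatic structure. -/
def IsAutomaticSemigroup (S : Type*) [Semigroup S] : Prop :=
  ∃ (A : Type) (_ : Finite A) (ψ : A → S) (L : Language A), IsAutomaticStructure S ψ L

end AutoSg

/-!
Keep in `L` only the shortlex-least representative of each element. A word `w ∈ L` fails to be
least exactly when some `u` with `padMap u w` in `L_= ∩ SL` exists, where `SL` is the padded
shortlex relation, recognised by a three-state automaton reading both words in parallel. The
projection of a regular padded language to its second component is regular (by Myhill–Nerode,
a left quotient of the projection is determined by finitely many left quotients of the padded
language), so the least representatives form a regular language. The equality and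
multiplier languages of the new structure are those of the old one cut down to pairs of least
representatives, and shortlex is a well-order, which gives existence and uniqueness.
-/

namespace Language

variable {α β : Type*}

theorem IsRegular.preimage_filterMap {L : Language α} (h : L.IsRegular) (f : β → Option α) :
    Language.IsRegular {p : List β | p.filterMap f ∈ L} := by
  refine .of_finite_range_leftQuotient <| (h.finite_range_leftQuotient.image
    fun q : Language α => {p : List β | p.filterMap f ∈ q}).subset ?_
  rintro _ ⟨x, rfl⟩
  exact ⟨L.leftQuotient (x.filterMap f), ⟨_, rfl⟩, by
    ext y
    change _ ∈ L ↔ (x ++ y).filterMap f ∈ L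
    rw [List.filterMap_append]⟩

end Language

namespace AutoSg

variable {A : Type*}

@[simp]
theorem padMap_nil_nil : padMap ([] : List A) [] = [] := rfl

@[simp]
theorem padMap_cons_cons (a b : A) (u v : List A) :
    padMap (a :: u) (b :: v) = (some a, some b) :: padMap u v := by
  simp [padMap]

@[simp]
theorem padMap_cons_nil (a : A) (u : List A) :
    padMap (a :: u) [] = (some a, none) :: padMap u [] := by
  simp [padMap, List.replicate_succ]

@[simp]
theorem padMap_nil_cons (b : A) (v : List A) :
    padMap [] (b :: v) = (none, some b) :: padMap [] v := by
  simp [padMap, List.replicate_succ]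

theorem padMap_nil_left (v : List A) : padMap [] v = v.map fun b => (none, some b) := by
  induction v <;> simp_all

@[simp]
theorem filterMap_fst_padMap (u v : List A) : (padMap u v).filterMap Prod.fst = u := by
  induction u generalizing v with
  | nil => simp [padMap_nil_left, List.filterMap_map]
  | cons a u ih => cases v <;> simp [ih]

@[simp]
theorem filterMap_snd_padMap (u v : List A) : (padMap u v).filterMap Prod.snd = v := by
  induction v generalizing u with
  | nil =>
    induction u with
    | nil => rfl
    | cons a u ih => simpa using ih
  | cons b v ih => cases u <;> simp [ih]

theorem padMap_inj {u v u' v' : List A} : padMap u v = padMap u' v' ↔ u = u' ∧ v = v' := by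
  refine ⟨fun h => ⟨?_, ?_⟩, fun ⟨hu, hv⟩ => hu ▸ hv ▸ rfl⟩
  · simpa using congrArg (List.filterMap Prod.fst) h
  · simpa using congrArg (List.filterMap Prod.snd) h

theorem padMap_append_of_length_eq {u₁ v₁ : List A} (h : u₁.length = v₁.length) (u₂ v₂ : List A) :
    padMap (u₁ ++ u₂) (v₁ ++ v₂) = padMap u₁ v₁ ++ padMap u₂ v₂ := by
  induction u₁ generalizing v₁ with
  | nil => rw [List.eq_nil_of_length_eq_zero h.symm]; rfl
  | cons a u ih =>
    cases v₁ with
    | nil => simp at h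
    | cons b v => simp [ih (Nat.succ.inj h)]

theorem padMap_append_right_of_length_le {u v : List A} (h : u.length ≤ v.length) (w : List A) :
    padMap u (v ++ w) = padMap u v ++ padMap [] w := by
  induction u generalizing v with
  | nil => simp [padMap_nil_left]
  | cons a u ih =>
    cases v with
    | nil => simp at h
    | cons b v => simp [ih (Nat.le_of_succ_le_succ h)]

theorem isRegular_exists_padMap_mem {R : Language (Option A × Option A)} (hR : R.IsRegular) :
    Language.IsRegular {w : List A | ∃ u, padMap u w ∈ R} := by
  have hF := hR.finite_range_leftQuotient
  let G : Set (Language (Option A × Option A)) × Set (Language (Option A × Option A)) →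
      Language A := fun P => {y | (∃ q ∈ P.1, ∃ u, padMap u y ∈ q) ∨ ∃ q ∈ P.2, padMap [] y ∈ q}
  refine .of_finite_range_leftQuotient <|
    ((hF.finite_subsets.prod hF.finite_subsets).image G).subset ?_
  rintro _ ⟨x, rfl⟩
  -- Split a witness `u` after `|x|` letters: either the padded prefix of length `|x|` has both
  -- components, or `u` is shorter than `x` and the rest of the padded word has no first component.
  refine ⟨({q | ∃ u, u.length = x.length ∧ q = R.leftQuotient (padMap u x)},
    {q | ∃ u, u.length < x.length ∧ q = R.leftQuotient (padMap u x)}),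
    ⟨?_, ?_⟩, ?_⟩
  · rintro _ ⟨u, -, rfl⟩
    exact ⟨_, rfl⟩
  · rintro _ ⟨u, -, rfl⟩
    exact ⟨_, rfl⟩
  ext y
  simp only [G, Set.mem_ofPred_eq]
  constructor
  · rintro (⟨_, ⟨u, hu, rfl⟩, u₂, h⟩ | ⟨_, ⟨u, hu, rfl⟩, h⟩)
    · exact ⟨u ++ u₂, by rwa [padMap_append_of_length_eq hu]⟩
    · exact ⟨u, by rwa [padMap_append_right_of_length_le hu.le]⟩
  · rintro ⟨u, hu⟩
    rcases le_or_gt x.length u.length with hle | hlt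
    · refine Or.inl ⟨_, ⟨u.take x.length, by simp [hle], rfl⟩, u.drop x.length, ?_⟩
      rwa [Language.mem_leftQuotient, ← padMap_append_of_length_eq (by simp [hle]),
        List.take_append_drop]
    · refine Or.inr ⟨_, ⟨u, hlt, rfl⟩, ?_⟩
      rwa [Language.mem_leftQuotient, ← padMap_append_right_of_length_le hlt.le]

section Shortlex

variable (r : A → A → Prop) [DecidableRel r] [DecidableEq A]

/-- Only runs on words `padMap u v` matter: the state is the lexicographic comparison of the
letters read so far, until the first padding symbol settles the comparison by length. -/
def shortlexDFA : DFA (Option A × Option A) Ordering where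
  step s x := match s, x with
    | .eq, (some a, some b) => if r a b then .lt else if a = b then .eq else .gt
    | s, (some _, some _) => s
    | _, (none, some _) => .lt
    | _, (some _, none) => .gt
    | s, (none, none) => s
  start := .eq
  accept := {.lt}

variable {r}

theorem shortlexDFA_evalFrom_padMap_of_length_lt {u v : List A} (h : u.length < v.length)
    (s : Ordering) : (shortlexDFA r).evalFrom s (padMap u v) = .lt := by
  induction u generalizing v s with
  | nil =>
    induction v generalizing s with
    | nil => simp at h
    | cons b v ih =>
      rw [padMap_nil_cons, DFA.evalFrom_cons]
      cases v with
      | nil => cases s <;> rfl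
      | cons c v => exact ih (by simp) _
  | cons a u ih =>
    cases v with
    | nil => simp at h
    | cons b v =>
      rw [padMap_cons_cons, DFA.evalFrom_cons]
      exact ih (Nat.lt_of_succ_lt_succ h) _

theorem shortlexDFA_evalFrom_padMap_of_length_gt {u v : List A} (h : v.length < u.length)
    (s : Ordering) : (shortlexDFA r).evalFrom s (padMap u v) = .gt := by
  induction v generalizing u s with
  | nil =>
    induction u generalizing s with
    | nil => simp at h
    | cons a u ih =>
      rw [padMap_cons_nil, DFA.evalFrom_cons]
      cases u with
      | nil => cases s <;> rfl
      | cons c u => exact ih (by simp) _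
  | cons b v ih =>
    cases u with
    | nil => simp at h
    | cons a u =>
      rw [padMap_cons_cons, DFA.evalFrom_cons]
      exact ih (Nat.lt_of_succ_lt_succ h) _

theorem shortlexDFA_evalFrom_padMap_of_length_eq {u v : List A} (h : u.length = v.length)
    {s : Ordering} (hs : s ≠ .eq) : (shortlexDFA r).evalFrom s (padMap u v) = s := by
  induction u generalizing v with
  | nil => rw [List.eq_nil_of_length_eq_zero h.symm]; rfl
  | cons a u ih =>
    cases v with
    | nil => simp at h
    | cons b v =>
      rw [padMap_cons_cons, DFA.evalFrom_cons]
      cases s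
      · exact ih (Nat.succ.inj h)
      · exact absurd rfl hs
      · exact ih (Nat.succ.inj h)

theorem shortlexDFA_evalFrom_padMap_eq_lt_iff {u v : List A} (h : u.length = v.length) :
    (shortlexDFA r).evalFrom .eq (padMap u v) = .lt ↔ List.Lex r u v := by
  induction u generalizing v with
  | nil =>
    rw [List.eq_nil_of_length_eq_zero h.symm]
    simp
  | cons a u ih =>
    cases v with
    | nil => simp at h
    | cons b v =>
      have hlen : u.length = v.length := Nat.succ.inj h
      have hstep : (shortlexDFA r).step .eq (some a, some b) =
          if r a b then .lt else if a = b then .eq else .gt := rfl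
      rw [padMap_cons_cons, DFA.evalFrom_cons, hstep, List.cons_lex_cons_iff]
      split_ifs with hab heq
      · simp [hab, shortlexDFA_evalFrom_padMap_of_length_eq hlen]
      · subst heq
        simpa [hab] using ih hlen
      · simp [hab, heq, shortlexDFA_evalFrom_padMap_of_length_eq hlen]

theorem padMap_mem_shortlexDFA_accepts_iff (u v : List A) :
    padMap u v ∈ (shortlexDFA r).accepts ↔ List.Shortlex r u v := by
  change (shortlexDFA r).evalFrom .eq (padMap u v) = .lt ↔ _
  rw [List.shortlex_def]
  rcases lt_trichotomy u.length v.length with h | h | h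
  · simp [shortlexDFA_evalFrom_padMap_of_length_lt h, h]
  · simp [shortlexDFA_evalFrom_padMap_eq_lt_iff h, h]
  · simp [shortlexDFA_evalFrom_padMap_of_length_gt h, h.not_gt, h.ne']

end Shortlex

theorem exists_isRegular_padMap_mem_iff_shortlex (r : A → A → Prop) :
    ∃ R : Language (Option A × Option A), R.IsRegular ∧
      ∀ u v, padMap u v ∈ R ↔ List.Shortlex r u v := by
  classical
  exact ⟨_, ⟨Ordering, inferInstance, shortlexDFA r, rfl⟩, padMap_mem_shortlexDFA_accepts_iff⟩

theorem isRegular_padMap_restrict {L L' : Language A} (hL' : L'.IsRegular) (hsub : L' ≤ L)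
    (P : List A → List A → Prop)
    (h : Language.IsRegular {p | ∃ u ∈ L, ∃ v ∈ L, p = padMap u v ∧ P u v}) :
    Language.IsRegular {p | ∃ u ∈ L', ∃ v ∈ L', p = padMap u v ∧ P u v} := by
  refine Eq.subst (motive := Language.IsRegular) ?_
    ((h.inf (hL'.preimage_filterMap Prod.fst)).inf (hL'.preimage_filterMap Prod.snd))
  ext p
  constructor
  · rintro ⟨⟨⟨u, -, v, -, rfl, huv⟩, hu⟩, hv⟩
    exact ⟨u, by simpa using hu, v, by simpa using hv, rfl, huv⟩
  · rintro ⟨u, hu, v, hv, rfl, huv⟩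
    exact ⟨⟨⟨u, hsub hu, v, hsub hv, rfl, huv⟩, by simpa using hu⟩, by simpa using hv⟩

variable {S : Type*} [Semigroup S] {ψ : A → S} {L : Language A}

variable (ψ L) in
def shortlexMinimal (r : A → A → Prop) : Language A :=
  {w | w ∈ L ∧ ∀ u ∈ L, evalWord ψ u = evalWord ψ w → ¬ List.Shortlex r u w}

theorem exists_mem_shortlexMinimal {r : A → A → Prop} (hr : WellFounded r) {w : List A}
    (hw : w ∈ L) : ∃ w' ∈ shortlexMinimal ψ L r, evalWord ψ w' = evalWord ψ w := by
  obtain ⟨w', ⟨hw', hw'w⟩, hmin⟩ :=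
    (List.Shortlex.wf hr).has_min {u | u ∈ L ∧ evalWord ψ u = evalWord ψ w} ⟨w, hw, rfl⟩
  exact ⟨w', ⟨hw', fun u hu huw' => hmin u ⟨hu, huw'.trans hw'w⟩⟩, hw'w⟩

theorem eq_of_mem_shortlexMinimal {r : A → A → Prop} [Std.Trichotomous r] {u v : List A}
    (hu : u ∈ shortlexMinimal ψ L r) (hv : v ∈ shortlexMinimal ψ L r)
    (h : evalWord ψ u = evalWord ψ v) : u = v := by
  rcases trichotomous_of (List.Shortlex r) u v with huv | huv | huv
  · exact absurd huv (hv.2 u hu.1 h)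
  · exact huv
  · exact absurd huv (hu.2 v hv.1 h.symm)

variable [Finite A]

theorem IsAutomaticStructure.of_le {L' : Language A} (hL : IsAutomaticStructure S ψ L)
    (hsub : L' ≤ L) (hL' : L'.IsRegular) (onto : ∀ s : S, ∃ w ∈ L', evalWord ψ w = some s) :
    IsAutomaticStructure S ψ L' where
  nonempty_words w hw := hL.nonempty_words w (hsub hw)
  regular := hL'
  onto := onto
  eq_regular := isRegular_padMap_restrict hL' hsub _ hL.eq_regular
  mul_regular a := isRegular_padMap_restrict hL' hsub _ (hL.mul_regular a)

theorem IsAutomaticStructure.isRegular_shortlexMinimal (hL : IsAutomaticStructure S ψ L)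
    (r : A → A → Prop) : (shortlexMinimal ψ L r).IsRegular := by
  obtain ⟨R, hR, hmemR⟩ := exists_isRegular_padMap_mem_iff_shortlex r
  convert hL.regular.inf (isRegular_exists_padMap_mem (hL.eq_regular.inf hR)).compl using 1
  ext w
  change w ∈ L ∧ _ ↔ w ∈ L ∧ ¬∃ u, (∃ u' ∈ L, ∃ v' ∈ L, padMap u w = padMap u' v' ∧
    evalWord ψ u' = evalWord ψ v') ∧ padMap u w ∈ R
  simp +contextual [padMap_inj, hmemR]

theorem IsAutomaticStructure.isAutomaticStructureWithUniqueness_shortlexMinimal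
    (hL : IsAutomaticStructure S ψ L) (r : A → A → Prop) [IsWellOrder A r] :
    IsAutomaticStructureWithUniqueness S ψ (shortlexMinimal ψ L r) where
  toIsAutomaticStructure := hL.of_le (fun _ hw => hw.1) (hL.isRegular_shortlexMinimal r) fun s => by
    obtain ⟨w, hw, hws⟩ := hL.onto s
    simpa only [hws] using exists_mem_shortlexMinimal (ψ := ψ) IsWellFounded.wf hw
  unique _ hu _ hv := eq_of_mem_shortlexMinimal hu hv

end AutoSg

open AutoSg in
/-- Any automatic semigroup admits an automatic structure with uniqueness. -/
theorem automatic_structure_with_uniqueness (S : Type*) [Semigroup S]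
    (h : IsAutomaticSemigroup S) :
    ∃ (A : Type) (_ : Finite A) (ψ : A → S) (L : Language A),
      IsAutomaticStructureWithUniqueness S ψ L := by
  obtain ⟨A, hA, ψ, L, hL⟩ := h
  exact ⟨A, hA, ψ, _, hL.isAutomaticStructureWithUniqueness_shortlexMinimal WellOrderingRel⟩
end

section
/- Let S₁ ∗ S₂ be the semigroup free product with automatic structure (A, L), and let B = {a ∈ A : a represents an element of S₁}. Then (B, L ∩ B⁺) is an automatic structure for S₁. -/
namespace AutoSg

/-- The defining relations of the semigroup free product `S₁ ∗ S₂`: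
multiply two adjacent letters coming from the same factor. -/
def freeProductRel (S₁ S₂ : Type*) [Semigroup S₁] [Semigroup S₂]
    (x y : FreeSemigroup (S₁ ⊕ S₂)) : Prop :=
  (∃ a b : S₁, x = FreeSemigroup.of (Sum.inl a) * FreeSemigroup.of (Sum.inl b) ∧
      y = FreeSemigroup.of (Sum.inl (a * b))) ∨
  (∃ a b : S₂, x = FreeSemigroup.of (Sum.inr a) * FreeSemigroup.of (Sum.inr b) ∧
      y = FreeSemigroup.of (Sum.inr (a * b)))

/-- The congruence on the free semigroup on `S₁ ⊕ S₂` generated by the defining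
relations of the free product. -/
def freeProductCon (S₁ S₂ : Type*) [Semigroup S₁] [Semigroup S₂] :
    Con (FreeSemigroup (S₁ ⊕ S₂)) :=
  conGen (freeProductRel S₁ S₂)

/-- The semigroup free product `S₁ ∗ S₂`. -/
def SemigroupFreeProduct (S₁ S₂ : Type*) [Semigroup S₁] [Semigroup S₂] :=
  (freeProductCon S₁ S₂).Quotient

instance (S₁ S₂ : Type*) [Semigroup S₁] [Semigroup S₂] :
    Semigroup (SemigroupFreeProduct S₁ S₂) :=
  Con.semigroup _

/-- The canonical map `S₁ → S₁ ∗ S₂`. -/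
def fpInl (S₁ S₂ : Type*) [Semigroup S₁] [Semigroup S₂] (s : S₁) :
    SemigroupFreeProduct S₁ S₂ :=
  ((FreeSemigroup.of (Sum.inl s) : FreeSemigroup (S₁ ⊕ S₂)) : (freeProductCon S₁ S₂).Quotient)

/-- The canonical map `S₂ → S₁ ∗ S₂`. -/
def fpInr (S₁ S₂ : Type*) [Semigroup S₁] [Semigroup S₂] (s : S₂) :
    SemigroupFreeProduct S₁ S₂ :=
  ((FreeSemigroup.of (Sum.inr s) : FreeSemigroup (S₁ ⊕ S₂)) : (freeProductCon S₁ S₂).Quotient)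

/-- The image of `S₁` in the free product, as a subsemigroup. -/
def fpLeftFactor (S₁ S₂ : Type*) [Semigroup S₁] [Semigroup S₂] :
    Subsemigroup (SemigroupFreeProduct S₁ S₂) where
  carrier := Set.range (fpInl S₁ S₂)
  mul_mem' := by
    rintro _ _ ⟨a, rfl⟩ ⟨b, rfl⟩
    refine ⟨a * b, ?_⟩
    have h : (freeProductCon S₁ S₂)
        (FreeSemigroup.of (Sum.inl a) * FreeSemigroup.of (Sum.inl b))
        (FreeSemigroup.of (Sum.inl (a * b))) :=
      ConGen.Rel.of _ _ (Or.inl ⟨a, b, rfl, rfl⟩)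
    have := (Con.eq (freeProductCon S₁ S₂)).2 h
    exact this.symm


end AutoSg

/-!
A word of `L` representing an element of `S₁` can only use letters from `S₁`: the map
`S₁ ∗ S₂ → S₁ ∪ {0}` that is the identity on `S₁` and sends `S₂` to `0` is a homomorphism, and an
element lies in `S₁` exactly when its image is nonzero. Hence `L ∩ B⁺` still maps onto `S₁`, and the
padded languages of `(B, L ∩ B⁺)` are the preimages of those of `(A, L)` under the letterwise
inclusion, which preserves regularity.
-/

theorem Language.IsRegular.preimage_map {α β : Type*} (g : β → α) {L : Language α}
    (h : L.IsRegular) : Language.IsRegular (List.map g ⁻¹' L) := by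
  obtain ⟨σ, _, M, rfl⟩ := h
  exact ⟨σ, inferInstance, M.comap g, M.accepts_comap g⟩

namespace AutoSg

section Padding

variable {A B : Type*}

theorem map_fst_padMap (u v : List A) :
    (padMap u v).map Prod.fst = u.map some ++ List.replicate (v.length - u.length) none :=
  List.map_fst_zip <| by
    simp only [List.length_append, List.length_map, List.length_replicate]; omega

theorem map_snd_padMap (u v : List A) :
    (padMap u v).map Prod.snd = v.map some ++ List.replicate (u.length - v.length) none :=
  List.map_snd_zip <| by
    simp only [List.length_append, List.length_map, List.length_replicate]; omega

theorem reduceOption_map_fst_padMap (u v : List A) :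
    ((padMap u v).map Prod.fst).reduceOption = u := by
  rw [map_fst_padMap, List.reduceOption_append, List.reduceOption_replicate_none, List.append_nil]
  simp [List.reduceOption]

theorem reduceOption_map_snd_padMap (u v : List A) :
    ((padMap u v).map Prod.snd).reduceOption = v := by
  rw [map_snd_padMap, List.reduceOption_append, List.reduceOption_replicate_none, List.append_nil]
  simp [List.reduceOption]

theorem padMap_map (g : B → A) (u v : List B) :
    padMap (u.map g) (v.map g) = (padMap u v).map (Prod.map (Option.map g) (Option.map g)) := by
  have hpad : ∀ (w : List B) (n : ℕ), (w.map g).map some ++ List.replicate n none =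
      (w.map some ++ List.replicate n none).map (Option.map g) := by
    simp [List.map_replicate]
  simp only [padMap, List.length_map, hpad, List.zipWith_map, List.map_zipWith]
  rfl

theorem exists_padMap_eq_of_map_eq {g : B → A} (hg : Function.Injective g)
    {p : List (Option B × Option B)} {u v : List A}
    (hp : p.map (Prod.map (Option.map g) (Option.map g)) = padMap u v) :
    ∃ u' v', u = u'.map g ∧ v = v'.map g ∧ p = padMap u' v' := by
  have hu : u = (p.map Prod.fst).reduceOption.map g := by
    rw [← reduceOption_map_fst_padMap u v, ← hp, ← List.reduceOption_map, List.map_map,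
      List.map_map]
    rfl
  have hv : v = (p.map Prod.snd).reduceOption.map g := by
    rw [← reduceOption_map_snd_padMap u v, ← hp, ← List.reduceOption_map, List.map_map,
      List.map_map]
    rfl
  refine ⟨_, _, hu, hv, List.map_injective_iff.2
    ((Option.map_injective hg).prodMap (Option.map_injective hg)) ?_⟩
  rw [hp, ← padMap_map, ← hu, ← hv]

theorem isRegular_padMap_comap {g : B → A} (hg : Function.Injective g) {L : Language A}
    {E : List A → List A → Prop} {E' : List B → List B → Prop}
    (hE : ∀ u v, E' u v ↔ E (u.map g) (v.map g))
    (h : Language.IsRegular {p | ∃ u ∈ L, ∃ v ∈ L, p = padMap u v ∧ E u v}) :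
    Language.IsRegular {p : List (Option B × Option B) |
      ∃ u ∈ {w : List B | w.map g ∈ L}, ∃ v ∈ {w : List B | w.map g ∈ L},
        p = padMap u v ∧ E' u v} := by
  refine (congrArg Language.IsRegular ?_).mpr
    (h.preimage_map (Prod.map (Option.map g) (Option.map g)))
  ext p
  constructor
  · rintro ⟨u, hu, v, hv, rfl, he⟩
    exact ⟨u.map g, hu, v.map g, hv, (padMap_map g u v).symm, (hE u v).1 he⟩
  · rintro ⟨u, hu, v, hv, hp, he⟩
    obtain ⟨u, v, rfl, rfl, rfl⟩ := exists_padMap_eq_of_map_eq hg hp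
    exact ⟨u, hu, v, hv, rfl, (hE u v).2 he⟩

end Padding

section EvalWord

variable {M N A B : Type*} [Semigroup M] [Semigroup N]

theorem evalWord_map (ψ : A → M) (g : B → A) (w : List B) :
    evalWord ψ (w.map g) = evalWord (ψ ∘ g) w := by
  cases w <;> simp [evalWord, List.map_map]

theorem evalWord_comp_mulHom (f : M →ₙ* N) (ψ : A → M) (w : List A) :
    evalWord (f ∘ ψ) w = (evalWord ψ w).map f := by
  cases w with
  | nil => rfl
  | cons a w =>
    simp only [evalWord, Option.map_some, List.foldl_map, Function.comp_apply]
    exact congrArg some (List.foldl_hom f fun x y => (map_mul f x (ψ y)).symm)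

theorem forall_mem_of_evalWord_mem {P : Set M} (hP : ∀ x y, x * y ∈ P → x ∈ P ∧ y ∈ P)
    {ψ : A → M} {w : List A} {x : M} (hw : evalWord ψ w = some x) (hx : x ∈ P) :
    ∀ a ∈ w, ψ a ∈ P := by
  have key : ∀ (l : List A) (y : M),
      (l.map ψ).foldl (· * ·) y ∈ P → y ∈ P ∧ ∀ a ∈ l, ψ a ∈ P := by
    intro l
    induction l with
    | nil => simp
    | cons b l ih =>
      intro y hy
      obtain ⟨hyb, hl⟩ := ih (y * ψ b) hy
      obtain ⟨hy, hb⟩ := hP _ _ hyb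
      exact ⟨hy, List.forall_mem_cons.2 ⟨hb, hl⟩⟩
  cases w with
  | nil => cases hw
  | cons a w =>
    obtain ⟨ha, hw'⟩ := key w (ψ a) (Option.some_inj.1 hw ▸ hx)
    exact List.forall_mem_cons.2 ⟨ha, hw'⟩

variable (ψ : A → M) (T : Subsemigroup M)

theorem evalWord_map_val (w : List {a // ψ a ∈ T}) :
    evalWord ψ (w.map Subtype.val) =
      (evalWord (fun b : {a // ψ a ∈ T} => (⟨ψ b.1, b.2⟩ : T)) w).map Subtype.val := by
  rw [evalWord_map]
  exact evalWord_comp_mulHom (MulMemClass.subtype T)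
    (fun b : {a // ψ a ∈ T} => (⟨ψ b.1, b.2⟩ : T)) w

theorem evalWord_restrict_eq_iff (u v : List {a // ψ a ∈ T}) :
    evalWord (fun b : {a // ψ a ∈ T} => (⟨ψ b.1, b.2⟩ : T)) u =
        evalWord (fun b : {a // ψ a ∈ T} => (⟨ψ b.1, b.2⟩ : T)) v ↔
      evalWord ψ (u.map Subtype.val) = evalWord ψ (v.map Subtype.val) := by
  rw [evalWord_map_val, evalWord_map_val, (Option.map_injective Subtype.val_injective).eq_iff]

end EvalWord

theorem IsAutomaticStructure.restrict {M : Type*} [Semigroup M] {A : Type*} [Finite A]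
    {ψ : A → M} {L : Language A} (h : IsAutomaticStructure M ψ L) (T : Subsemigroup M)
    (hT : ∀ x y, x * y ∈ T → x ∈ T ∧ y ∈ T) :
    IsAutomaticStructure T (fun b : {a // ψ a ∈ T} => (⟨ψ b.1, b.2⟩ : T))
      {w : List {a // ψ a ∈ T} | w.map Subtype.val ∈ L} where
  nonempty_words w hw hnil := h.nonempty_words _ hw (by rw [hnil, List.map_nil])
  regular := h.regular.preimage_map Subtype.val
  onto := by
    rintro ⟨x, hx⟩
    obtain ⟨w, hw, hwx⟩ := h.onto x
    lift w to List {a // ψ a ∈ T} using forall_mem_of_evalWord_mem hT hwx hx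
    refine ⟨w, hw, ?_⟩
    rw [evalWord_map_val, Option.map_eq_some_iff] at hwx
    obtain ⟨y, hy, rfl⟩ := hwx
    exact hy
  eq_regular :=
    isRegular_padMap_comap Subtype.val_injective (evalWord_restrict_eq_iff ψ T) h.eq_regular
  mul_regular b :=
    isRegular_padMap_comap Subtype.val_injective
      (fun u v => by rw [evalWord_restrict_eq_iff, List.map_append, List.map_singleton])
      (h.mul_regular b.1)

section FreeProduct

variable {S₁ S₂ : Type*} [Semigroup S₁] [Semigroup S₂]

theorem freeProductCon_le_ker :
    freeProductCon S₁ S₂ ≤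
      Con.ker (FreeSemigroup.lift (Sum.elim ((↑) : S₁ → WithZero S₁) (0 : S₂ → WithZero S₁))) :=
  Con.conGen_le.2 <| by
    rintro _ _ (⟨a, b, rfl, rfl⟩ | ⟨a, b, rfl, rfl⟩) <;>
      simp only [Con.ker_rel, map_mul, FreeSemigroup.lift_of, Sum.elim_inl, Sum.elim_inr,
        WithZero.coe_mul, Pi.zero_apply, mul_zero]

def retractLeft : SemigroupFreeProduct S₁ S₂ →ₙ* WithZero S₁ where
  toFun x := Con.liftOn x (FreeSemigroup.lift (Sum.elim ((↑) : S₁ → WithZero S₁) 0)) fun _ _ h =>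
    freeProductCon_le_ker h
  map_mul' x y := Con.induction_on₂ x y fun _ _ => map_mul _ _ _

theorem mem_fpLeftFactor_iff_retractLeft_ne_zero {x : SemigroupFreeProduct S₁ S₂} :
    x ∈ fpLeftFactor S₁ S₂ ↔ retractLeft x ≠ 0 := by
  constructor
  · rintro ⟨s, rfl⟩
    exact WithZero.coe_ne_zero (a := s)
  · let π : FreeSemigroup (S₁ ⊕ S₂) →ₙ* SemigroupFreeProduct S₁ S₂ :=
      (freeProductCon S₁ S₂).mkMulHom
    suffices h : ∀ z, retractLeft (π z) ≠ 0 → π z ∈ fpLeftFactor S₁ S₂ from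
      Con.induction_on x h
    intro z
    induction z using FreeSemigroup.recOnMul with
    | ih1 s =>
      rcases s with s | s
      · exact fun _ => ⟨s, rfl⟩
      · exact fun hs => (hs rfl).elim
    | ih2 a y ha hy =>
      intro hay
      rw [map_mul, map_mul] at hay
      rw [map_mul]
      exact (fpLeftFactor S₁ S₂).mul_mem (ha (left_ne_zero_of_mul hay))
        (hy (right_ne_zero_of_mul hay))

theorem mul_mem_fpLeftFactor_iff {x y : SemigroupFreeProduct S₁ S₂} :
    x * y ∈ fpLeftFactor S₁ S₂ ↔ x ∈ fpLeftFactor S₁ S₂ ∧ y ∈ fpLeftFactor S₁ S₂ := by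
  simp only [mem_fpLeftFactor_iff_retractLeft_ne_zero, map_mul]
  exact ⟨fun h => ⟨left_ne_zero_of_mul h, right_ne_zero_of_mul h⟩,
    fun ⟨hx, hy⟩ => mul_ne_zero hx hy⟩

end FreeProduct

end AutoSg

open AutoSg in
/-- If `(A, L)` is an automatic structure for the free product `S₁ ∗ S₂` and
`B = {a ∈ A : a represents an element of S₁}`, then `(B, L ∩ B⁺)` is an automatic
structure for `S₁` (identified with its image in the free product). -/
theorem freeProduct_factor_automatic_structure (S₁ S₂ : Type*) [Semigroup S₁] [Semigroup S₂]
    (A : Type) [Finite A] (ψ : A → SemigroupFreeProduct S₁ S₂) (L : Language A)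
    (h : IsAutomaticStructure (SemigroupFreeProduct S₁ S₂) ψ L) :
    IsAutomaticStructure (fpLeftFactor S₁ S₂)
      (fun b : {a : A // ψ a ∈ fpLeftFactor S₁ S₂} => (⟨ψ b.1, b.2⟩ : fpLeftFactor S₁ S₂))
      {w : List {a : A // ψ a ∈ fpLeftFactor S₁ S₂} | w.map Subtype.val ∈ L} :=
  h.restrict _ fun _ _ => mul_mem_fpLeftFactor_iff.1
end
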